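/- arXiv:2305.17643 — 2 statements merged into one kernel-verified Lean document; each statement's English description precedes it below -/
import Mathlib

section
/- (Theorem 1, projective identification of the average causal effect.) Under the sensitivity parametrization, τ = E[Z·μ1(X) + (1−Z)·μ1(X)/ε1(X)] − E[Z·μ0(X)·ε0(X) + (1−Z)·μ0(X)]. -/
/-!
Since `Z` is binary, `Y(1) = Z·Y(1) + (1−Z)·Y(1)`, and conditionally on `𝔛` the two
arms have means `μ1·e` and, by the sensitivity relation, `(μ1/ε1)·(1−e)`. Pulling the
`𝔛`-measurable factors out of `E[Z·μ1 + (1−Z)·μ1/ε1 ∣ 𝔛]` gives the same conditional mean,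
so the tower property identifies `E[Y(1)]`; `E[Y(0)]` is handled symmetrically with arm
means `μ0·ε0·e` and `μ0·(1−e)`.
-/

open MeasureTheory

section BinaryTreatment

variable {Ω : Type*} {m F : MeasurableSpace Ω} {P : Measure Ω} {Z : Ω → ℝ}

lemma one_sub_eq_zero_or_one (hZ01 : ∀ ω, Z ω = 0 ∨ Z ω = 1) (ω : Ω) :
    1 - Z ω = 0 ∨ 1 - Z ω = 1 := by
  rcases hZ01 ω with h | h <;> simp [h]

lemma MeasureTheory.Integrable.mul_of_eq_zero_or_one (hZ01 : ∀ ω, Z ω = 0 ∨ Z ω = 1)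
    (hZ : AEStronglyMeasurable Z P) {f : Ω → ℝ} (hf : Integrable f P) :
    Integrable (fun ω => Z ω * f ω) P :=
  hf.bdd_mul (c := 1) hZ (.of_forall fun ω => by rcases hZ01 ω with h | h <;> simp [h])

lemma treated_mul_observed (hZ01 : ∀ ω, Z ω = 0 ∨ Z ω = 1) {Y1 Y0 Y : Ω → ℝ}
    (hYdef : ∀ ω, Y ω = Z ω * Y1 ω + (1 - Z ω) * Y0 ω) :
    (fun ω => Z ω * Y ω) = fun ω => Z ω * Y1 ω := by
  funext ω; rcases hZ01 ω with h | h <;> simp [hYdef ω, h]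

lemma control_mul_observed (hZ01 : ∀ ω, Z ω = 0 ∨ Z ω = 1) {Y1 Y0 Y : Ω → ℝ}
    (hYdef : ∀ ω, Y ω = Z ω * Y1 ω + (1 - Z ω) * Y0 ω) :
    (fun ω => (1 - Z ω) * Y ω) = fun ω => (1 - Z ω) * Y0 ω := by
  funext ω; rcases hZ01 ω with h | h <;> simp [hYdef ω, h]

lemma condExp_one_sub [IsFiniteMeasure P] (hm : m ≤ F) (hZ : Integrable Z P) :
    P[fun ω => 1 - Z ω|m] =ᵐ[P] fun ω => 1 - P[Z|m] ω := by
  filter_upwards [condExp_sub (integrable_const (1 : ℝ)) hZ m] with ω hω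
  exact hω.trans (by simp [condExp_const hm])

lemma condExp_binary_mixture [IsFiniteMeasure P] (hm : m ≤ F)
    (hZ01 : ∀ ω, Z ω = 0 ∨ Z ω = 1) (hZ : Measurable Z) {g h : Ω → ℝ}
    (hg : StronglyMeasurable[m] g) (hh : StronglyMeasurable[m] h)
    (hint : Integrable (fun ω => Z ω * g ω + (1 - Z ω) * h ω) P) :
    P[fun ω => Z ω * g ω + (1 - Z ω) * h ω|m]
      =ᵐ[P] fun ω => g ω * P[Z|m] ω + h ω * (1 - P[Z|m] ω) := by
  have hZi : Integrable Z P := by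
    simpa using (integrable_const (1 : ℝ)).mul_of_eq_zero_or_one hZ01 hZ.aestronglyMeasurable
  have hgZ : Integrable (g * Z) P :=
    (hint.mul_of_eq_zero_or_one hZ01 hZ.aestronglyMeasurable).congr
      (.of_forall fun ω => by rcases hZ01 ω with h | h <;> simp [h, mul_comm])
  have hh1Z : Integrable (h * fun ω => 1 - Z ω) P :=
    (hint.mul_of_eq_zero_or_one (one_sub_eq_zero_or_one hZ01)
      (measurable_const.sub hZ).aestronglyMeasurable).congr
      (.of_forall fun ω => by rcases hZ01 ω with h | h <;> simp [h, mul_comm])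
  have hsplit : (fun ω => Z ω * g ω + (1 - Z ω) * h ω) = g * Z + h * fun ω => 1 - Z ω := by
    funext ω; simp only [Pi.add_apply, Pi.mul_apply]; ring
  rw [hsplit]
  filter_upwards [condExp_add hgZ hh1Z m, condExp_mul_of_stronglyMeasurable_left hg hgZ hZi,
    condExp_mul_of_stronglyMeasurable_left hh hh1Z ((integrable_const 1).sub hZi),
    condExp_one_sub hm hZi] with ω hadd hgω hhω h1Z
  rw [hadd, Pi.add_apply, hgω, hhω, Pi.mul_apply, Pi.mul_apply, h1Z]

theorem integral_eq_integral_binary_mixture [IsFiniteMeasure P] (hm : m ≤ F)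
    (hZ01 : ∀ ω, Z ω = 0 ∨ Z ω = 1) (hZ : Measurable Z) {Y g h e : Ω → ℝ}
    (hY : Integrable Y P) (hg : StronglyMeasurable[m] g) (hh : StronglyMeasurable[m] h)
    (hint : Integrable (fun ω => Z ω * g ω + (1 - Z ω) * h ω) P) (he : e =ᵐ[P] P[Z|m])
    (hZY : P[fun ω => Z ω * Y ω|m] =ᵐ[P] fun ω => g ω * e ω)
    (h1ZY : P[fun ω => (1 - Z ω) * Y ω|m] =ᵐ[P] fun ω => h ω * (1 - e ω)) :
    ∫ ω, Y ω ∂P = ∫ ω, (Z ω * g ω + (1 - Z ω) * h ω) ∂P := by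
  have hsplit : Y = (fun ω => Z ω * Y ω) + fun ω => (1 - Z ω) * Y ω := by
    funext ω; simp only [Pi.add_apply]; ring
  have hYce : P[Y|m] =ᵐ[P] P[fun ω => Z ω * g ω + (1 - Z ω) * h ω|m] := by
    have hadd := condExp_add (m := m) (hY.mul_of_eq_zero_or_one hZ01 hZ.aestronglyMeasurable)
      (hY.mul_of_eq_zero_or_one (one_sub_eq_zero_or_one hZ01)
        (measurable_const.sub hZ).aestronglyMeasurable)
    rw [← hsplit] at hadd
    filter_upwards [hadd, hZY, h1ZY, he, condExp_binary_mixture hm hZ01 hZ hg hh hint]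
      with ω hYω hZYω h1ZYω heω hmix
    rw [hYω, Pi.add_apply, hZYω, h1ZYω, hmix, heω]
  calc ∫ ω, Y ω ∂P = ∫ ω, P[Y|m] ω ∂P := (integral_condExp hm).symm
    _ = ∫ ω, P[fun ω => Z ω * g ω + (1 - Z ω) * h ω|m] ω ∂P := integral_congr_ae hYce
    _ = _ := integral_condExp hm

end BinaryTreatment

lemma control_mean_of_sensitivity {e ε a b μ : ℝ} (he : e ≠ 0) (hε : ε ≠ 0)
    (hs : (1 - e) * a = ε * e * b) (ha : a = μ * e) : b = μ / ε * (1 - e) := by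
  apply mul_left_cancel₀ (mul_ne_zero hε he)
  rw [← hs, ha]
  field_simp

lemma treated_mean_of_sensitivity {e ε a b μ : ℝ} (he : 1 - e ≠ 0)
    (hs : (1 - e) * a = ε * e * b) (hb : b = μ * (1 - e)) : a = μ * ε * e := by
  apply mul_left_cancel₀ he
  rw [hs, hb]
  ring

theorem projective_identification_ate_general
    {Ω : Type*} [F : MeasurableSpace Ω] (P : Measure Ω) [IsProbabilityMeasure P]
    (Z Y1 Y0 Y : Ω → ℝ)
    (hZmeas : Measurable Z) (hZ01 : ∀ ω, Z ω = 0 ∨ Z ω = 1)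
    (hY1int : Integrable Y1 P) (hY0int : Integrable Y0 P)
    (hYdef : ∀ ω, Y ω = Z ω * Y1 ω + (1 - Z ω) * Y0 ω)
    (mX : MeasurableSpace Ω) (hmX : mX ≤ F)
    (eX : Ω → ℝ) (heX : eX =ᵐ[P] P[Z|mX])
    (hov : ∀ᵐ ω ∂P, 0 < eX ω ∧ eX ω < 1)
    (mu1 mu0 : Ω → ℝ) (hmu1meas : Measurable[mX] mu1) (hmu0meas : Measurable[mX] mu0)
    (hmu1 : (fun ω => mu1 ω * eX ω) =ᵐ[P] P[fun ω => Z ω * Y ω|mX])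
    (hmu0 : (fun ω => mu0 ω * (1 - eX ω)) =ᵐ[P] P[fun ω => (1 - Z ω) * Y ω|mX])
    (eps1 eps0 : Ω → ℝ)
    (heps1meas : Measurable[mX] eps1) (heps0meas : Measurable[mX] eps0)
    (heps1pos : ∀ᵐ ω ∂P, 0 < eps1 ω)
    (hsens1 : ∀ᵐ ω ∂P, (1 - eX ω) * (P[fun ω' => Z ω' * Y1 ω'|mX]) ω
        = eps1 ω * eX ω * (P[fun ω' => (1 - Z ω') * Y1 ω'|mX]) ω)
    (hsens0 : ∀ᵐ ω ∂P, (1 - eX ω) * (P[fun ω' => Z ω' * Y0 ω'|mX]) ω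
        = eps0 ω * eX ω * (P[fun ω' => (1 - Z ω') * Y0 ω'|mX]) ω)
    (hint1 : Integrable (fun ω => Z ω * mu1 ω + (1 - Z ω) * (mu1 ω / eps1 ω)) P)
    (hint2 : Integrable (fun ω => Z ω * (mu0 ω * eps0 ω) + (1 - Z ω) * mu0 ω) P) :
    ∫ ω, Y1 ω ∂P - ∫ ω, Y0 ω ∂P
      = ∫ ω, (Z ω * mu1 ω + (1 - Z ω) * (mu1 ω / eps1 ω)) ∂P
        - ∫ ω, (Z ω * (mu0 ω * eps0 ω) + (1 - Z ω) * mu0 ω) ∂P := by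
  have htreated1 : P[fun ω => Z ω * Y1 ω|mX] =ᵐ[P] fun ω => mu1 ω * eX ω := by
    rw [← treated_mul_observed hZ01 hYdef]; exact hmu1.symm
  have hcontrol0 : P[fun ω => (1 - Z ω) * Y0 ω|mX] =ᵐ[P] fun ω => mu0 ω * (1 - eX ω) := by
    rw [← control_mul_observed hZ01 hYdef]; exact hmu0.symm
  have hcontrol1 :
      P[fun ω => (1 - Z ω) * Y1 ω|mX] =ᵐ[P] fun ω => mu1 ω / eps1 ω * (1 - eX ω) := by
    filter_upwards [hsens1, htreated1, heps1pos, hov] with ω hs ht hε he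
    exact control_mean_of_sensitivity he.1.ne' hε.ne' hs ht
  have htreated0 : P[fun ω => Z ω * Y0 ω|mX] =ᵐ[P] fun ω => mu0 ω * eps0 ω * eX ω := by
    filter_upwards [hsens0, hcontrol0, hov] with ω hs hc he
    exact treated_mean_of_sensitivity (sub_ne_zero.2 he.2.ne') hs hc
  rw [integral_eq_integral_binary_mixture (h := fun ω => mu1 ω / eps1 ω) hmX hZ01 hZmeas hY1int
      hmu1meas.stronglyMeasurable (hmu1meas.div heps1meas).stronglyMeasurable hint1 heX
      htreated1 hcontrol1,
    integral_eq_integral_binary_mixture (g := fun ω => mu0 ω * eps0 ω) hmX hZ01 hZmeas hY0int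
      (hmu0meas.mul heps0meas).stronglyMeasurable hmu0meas.stronglyMeasurable hint2 heX
      htreated0 hcontrol0]

/-- Theorem 1 (projective identification of the average causal effect). -/
theorem projective_identification_ate
    {Ω : Type*} [F : MeasurableSpace Ω] (P : Measure Ω) [IsProbabilityMeasure P]
    (Z Y1 Y0 Y : Ω → ℝ)
    (hZmeas : Measurable Z) (hZ01 : ∀ ω, Z ω = 0 ∨ Z ω = 1)
    (hY1int : Integrable Y1 P) (hY0int : Integrable Y0 P)
    (hYdef : ∀ ω, Y ω = Z ω * Y1 ω + (1 - Z ω) * Y0 ω)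
    (mX : MeasurableSpace Ω) (hmX : mX ≤ F)
    (eX : Ω → ℝ) (heXmeas : Measurable[mX] eX) (heX : eX =ᵐ[P] P[Z|mX])
    (hov : ∀ᵐ ω ∂P, 0 < eX ω ∧ eX ω < 1)
    (mu1 mu0 : Ω → ℝ) (hmu1meas : Measurable[mX] mu1) (hmu0meas : Measurable[mX] mu0)
    (hmu1 : (fun ω => mu1 ω * eX ω) =ᵐ[P] P[fun ω => Z ω * Y ω|mX])
    (hmu0 : (fun ω => mu0 ω * (1 - eX ω)) =ᵐ[P] P[fun ω => (1 - Z ω) * Y ω|mX])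
    (eps1 eps0 : Ω → ℝ)
    (heps1meas : Measurable[mX] eps1) (heps0meas : Measurable[mX] eps0)
    (heps1pos : ∀ᵐ ω ∂P, 0 < eps1 ω) (heps0pos : ∀ᵐ ω ∂P, 0 < eps0 ω)
    (hsens1 : ∀ᵐ ω ∂P, (1 - eX ω) * (P[fun ω' => Z ω' * Y1 ω'|mX]) ω
        = eps1 ω * eX ω * (P[fun ω' => (1 - Z ω') * Y1 ω'|mX]) ω)
    (hsens0 : ∀ᵐ ω ∂P, (1 - eX ω) * (P[fun ω' => Z ω' * Y0 ω'|mX]) ω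
        = eps0 ω * eX ω * (P[fun ω' => (1 - Z ω') * Y0 ω'|mX]) ω)
    (hint1 : Integrable (fun ω => Z ω * mu1 ω + (1 - Z ω) * (mu1 ω / eps1 ω)) P)
    (hint2 : Integrable (fun ω => Z ω * (mu0 ω * eps0 ω) + (1 - Z ω) * mu0 ω) P) :
    ∫ ω, Y1 ω ∂P - ∫ ω, Y0 ω ∂P
      = ∫ ω, (Z ω * mu1 ω + (1 - Z ω) * (mu1 ω / eps1 ω)) ∂P
        - ∫ ω, (Z ω * (mu0 ω * eps0 ω) + (1 - Z ω) * mu0 ω) ∂P :=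
  projective_identification_ate_general (F := F) P Z Y1 Y0 Y hZmeas hZ01 hY1int hY0int hYdef mX hmX
    eX heX hov mu1 mu0 hmu1meas hmu0meas hmu1 hmu0 eps1 eps0 heps1meas heps0meas heps1pos hsens1
    hsens0 hint1 hint2
end

section
/- (Theorem S3, double robustness for the average causal effect on the treated.) Assume e := P(Z=1) > 0. Let e*(X) be 𝔛-measurable with 0 < e*(X) < 1 almost surely and let μ0*(X) be 𝔛-measurable and integrable, and define μ_{T0}^{dr} = E[ ε0(X)·{ e*(X)·(1−Z)·Y/(1−e*(X)) − (e*(X)−Z)·μ0*(X)/(1−e*(X)) } ] / e. If either e*(X) = e(X) almost surely, or μ0*(X) = μ0(X) almost surely, then μ_{T0}^{dr} = E[Y(0) ∣ Z=1]. -/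
/-!
Write the score as `ε₀/(1-e*) · W` with `W = e*·(1-Z)Y - (e* - Z)·μ₀*`. Since `(1-Z)Y = (1-Z)Y(0)`,
pulling the `X`-measurable factors out of the conditional expectation gives
`E[score ∣ X] = ε₀/(1-e*) · (e*·E[(1-Z)Y(0) ∣ X] - (e* - e)·μ₀*)`. When `e* = e` the
sensitivity relation turns this into `E[Z·Y(0) ∣ X]`; when `μ₀* = μ₀` one has
`E[(1-Z)Y(0) ∣ X] = μ₀·(1-e)`, the factor `1 - e*` cancels, and the sensitivity relation again
gives `E[Z·Y(0) ∣ X]`. Integrating, `E[score] = E[Z·Y(0)] = E[Y(0); Z = 1]`.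
-/

open MeasureTheory ProbabilityTheory

lemma att_conditional_score_eq_of_propensity_eq {e ε c₀ c₁ ν : ℝ} (he : e ≠ 1)
    (hsens : (1 - e) * c₀ = ε * e * c₁) :
    ε / (1 - e) * (e * c₁ - (e - e) * ν) = c₀ := by
  have : 1 - e ≠ 0 := sub_ne_zero.mpr he.symm
  field_simp
  linarith

lemma att_conditional_score_eq_of_outcome_eq {e e' ε c₀ c₁ ν : ℝ} (he : e ≠ 1) (he' : e' ≠ 1)
    (hsens : (1 - e) * c₀ = ε * e * c₁) (hν : ν * (1 - e) = c₁) :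
    ε / (1 - e') * (e' * c₁ - (e' - e) * ν) = c₀ := by
  have h : 1 - e ≠ 0 := sub_ne_zero.mpr he.symm
  have h' : 1 - e' ≠ 0 := sub_ne_zero.mpr he'.symm
  have hc₀ : c₀ = ε * e * ν := mul_left_cancel₀ h (by rw [hsens, ← hν]; ring)
  rw [hc₀, ← hν]
  field_simp
  ring

section ConditionalExpectation

variable {Ω : Type*} {m m₀ : MeasurableSpace Ω} {μ : Measure Ω} {e h Z ν : Ω → ℝ}

lemma integrable_mul_sub_sub_mul (he : AEStronglyMeasurable e μ) (he_bound : ∀ᵐ ω ∂μ, ‖e ω‖ ≤ 1)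
    (hh : Integrable h μ) (hZ : AEStronglyMeasurable Z μ) (hZ_bound : ∀ᵐ ω ∂μ, ‖Z ω‖ ≤ 1)
    (hν : Integrable ν μ) :
    Integrable (fun ω ↦ e ω * h ω - (e ω - Z ω) * ν ω) μ :=
  (hh.bdd_mul he he_bound).sub (hν.bdd_mul (he.sub hZ) (c := 2) <| by
    filter_upwards [he_bound, hZ_bound] with ω he hZ
    linarith [norm_sub_le (e ω) (Z ω)])

lemma condExp_mul_sub_sub_mul (hm : m ≤ m₀) [SigmaFinite (μ.trim hm)]
    (he : StronglyMeasurable[m] e) (he_bound : ∀ᵐ ω ∂μ, ‖e ω‖ ≤ 1) (hh : Integrable h μ)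
    (hZ : Integrable Z μ) (hZ_bound : ∀ᵐ ω ∂μ, ‖Z ω‖ ≤ 1)
    (hν : StronglyMeasurable[m] ν) (hνi : Integrable ν μ) :
    μ[fun ω ↦ e ω * h ω - (e ω - Z ω) * ν ω | m]
      =ᵐ[μ] fun ω ↦ e ω * μ[h | m] ω - (e ω - μ[Z | m] ω) * ν ω := by
  have heh : Integrable (e * h) μ := hh.bdd_mul (he.mono hm).aestronglyMeasurable he_bound
  have heν : Integrable (e * ν) μ := hνi.bdd_mul (he.mono hm).aestronglyMeasurable he_bound
  have hνZ : Integrable (ν * Z) μ :=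
    (hνi.bdd_mul hZ.aestronglyMeasurable hZ_bound).congr (.of_forall fun ω ↦ mul_comm _ _)
  have hsplit : (fun ω ↦ e ω * h ω - (e ω - Z ω) * ν ω) = e * h - e * ν + ν * Z := by
    funext ω
    simp only [Pi.add_apply, Pi.sub_apply, Pi.mul_apply]
    ring
  rw [hsplit]
  filter_upwards [condExp_add (heh.sub heν) hνZ m, condExp_sub heh heν m,
    condExp_mul_of_stronglyMeasurable_left he heh hh,
    condExp_mul_of_stronglyMeasurable_left hν hνZ hZ] with ω hadd hsub heh hνZ
  rw [hadd, Pi.add_apply, hsub, Pi.sub_apply, heh, hνZ,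
    condExp_of_stronglyMeasurable hm (he.mul hν) heν]
  simp only [Pi.mul_apply]
  ring

/-- The score of the theorem, with `h` in place of `(1 - Z) * Y`. -/
noncomputable def attScore (ε e Z h ν : Ω → ℝ) : Ω → ℝ :=
  fun ω ↦ ε ω * (e ω * h ω / (1 - e ω) - (e ω - Z ω) * ν ω / (1 - e ω))

lemma condExp_attScore (hm : m ≤ m₀) [SigmaFinite (μ.trim hm)] {ε : Ω → ℝ}
    (hε : StronglyMeasurable[m] ε) (he : StronglyMeasurable[m] e)
    (he_bound : ∀ᵐ ω ∂μ, ‖e ω‖ ≤ 1) (hh : Integrable h μ) (hZ : Integrable Z μ)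
    (hZ_bound : ∀ᵐ ω ∂μ, ‖Z ω‖ ≤ 1) (hν : StronglyMeasurable[m] ν) (hνi : Integrable ν μ)
    (hint : Integrable (attScore ε e Z h ν) μ) :
    μ[attScore ε e Z h ν | m] =ᵐ[μ]
      fun ω ↦ ε ω / (1 - e ω) * (e ω * μ[h | m] ω - (e ω - μ[Z | m] ω) * ν ω) := by
  have hfactor : attScore ε e Z h ν
      = (fun ω ↦ ε ω / (1 - e ω)) * fun ω ↦ e ω * h ω - (e ω - Z ω) * ν ω := by
    funext ω
    simp only [attScore, Pi.mul_apply]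
    ring
  have hc : StronglyMeasurable[m] fun ω ↦ ε ω / (1 - e ω) :=
    hε.div (stronglyMeasurable_const.sub he)
  have hW := integrable_mul_sub_sub_mul (he.mono hm).aestronglyMeasurable he_bound hh
    hZ.aestronglyMeasurable hZ_bound hνi
  rw [hfactor] at hint ⊢
  filter_upwards [condExp_mul_of_stronglyMeasurable_left hc hint hW,
    condExp_mul_sub_sub_mul hm he he_bound hh hZ hZ_bound hν hνi] with ω hpull hW
  rw [hpull, Pi.mul_apply, hW]

lemma integral_eq_of_condExp_ae_eq {f g : Ω → ℝ} (hm : m ≤ m₀) [SigmaFinite (μ.trim hm)]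
    (hfg : μ[f | m] =ᵐ[μ] μ[g | m]) : ∫ ω, f ω ∂μ = ∫ ω, g ω ∂μ := by
  rw [← integral_condExp hm, integral_congr_ae hfg, integral_condExp hm]

end ConditionalExpectation

lemma one_sub_mul_observed_eq {z y₁ y₀ : ℝ} (hz : z = 0 ∨ z = 1) :
    (1 - z) * (z * y₁ + (1 - z) * y₀) = (1 - z) * y₀ := by
  rcases hz with rfl | rfl <;> ring

lemma integral_mul_eq_setIntegral_of_zero_or_one {Ω : Type*} {mΩ : MeasurableSpace Ω}
    {μ : Measure Ω} {Z f : Ω → ℝ} (hZ : Measurable Z) (hZ01 : ∀ ω, Z ω = 0 ∨ Z ω = 1) :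
    ∫ ω, Z ω * f ω ∂μ = ∫ ω in {ω | Z ω = 1}, f ω ∂μ := by
  have hA : MeasurableSet {ω | Z ω = 1} := hZ (measurableSet_singleton 1)
  rw [← integral_indicator hA]
  congr 1 with ω
  rcases hZ01 ω with h | h <;> simp [Set.indicator, h]

lemma integral_cond_eq_setIntegral_div {Ω : Type*} {mΩ : MeasurableSpace Ω} (μ : Measure Ω)
    (s : Set Ω) (f : Ω → ℝ) : ∫ ω, f ω ∂(μ[|s]) = (∫ ω in s, f ω ∂μ) / (μ s).toReal := by
  rw [ProbabilityTheory.cond, integral_smul_measure, ENNReal.toReal_inv, smul_eq_mul,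
    inv_mul_eq_div]

theorem att_double_robustness_general
    {Ω : Type*} [F : MeasurableSpace Ω] (P : Measure Ω) [IsProbabilityMeasure P]
    (Z Y1 Y0 Y : Ω → ℝ)
    (hZmeas : Measurable Z) (hZ01 : ∀ ω, Z ω = 0 ∨ Z ω = 1)
    (hY0int : Integrable Y0 P)
    (hYdef : ∀ ω, Y ω = Z ω * Y1 ω + (1 - Z ω) * Y0 ω)
    (mX : MeasurableSpace Ω) (hmX : mX ≤ F)
    (eX : Ω → ℝ) (heX : eX =ᵐ[P] P[Z|mX])
    (hov : ∀ᵐ ω ∂P, 0 < eX ω ∧ eX ω < 1)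
    (mu0 : Ω → ℝ)
    (hmu0 : (fun ω => mu0 ω * (1 - eX ω)) =ᵐ[P] P[fun ω => (1 - Z ω) * Y ω|mX])
    (eps0 : Ω → ℝ) (heps0meas : Measurable[mX] eps0)
    (hsens0 : ∀ᵐ ω ∂P, (1 - eX ω) * (P[fun ω' => Z ω' * Y0 ω'|mX]) ω
        = eps0 ω * eX ω * (P[fun ω' => (1 - Z ω') * Y0 ω'|mX]) ω)
    (es : Ω → ℝ) (hesmeas : Measurable[mX] es)
    (hes01 : ∀ᵐ ω ∂P, 0 < es ω ∧ es ω < 1)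
    (mu0s : Ω → ℝ) (hmu0smeas : Measurable[mX] mu0s) (hmu0sint : Integrable mu0s P)
    (hint : Integrable (fun ω => eps0 ω * (es ω * ((1 - Z ω) * Y ω) / (1 - es ω)
        - (es ω - Z ω) * mu0s ω / (1 - es ω))) P)
    (hcase : es =ᵐ[P] eX ∨ mu0s =ᵐ[P] mu0) :
    (∫ ω, eps0 ω * (es ω * ((1 - Z ω) * Y ω) / (1 - es ω)
        - (es ω - Z ω) * mu0s ω / (1 - es ω)) ∂P) / (P {ω | Z ω = 1}).toReal
      = ∫ ω, Y0 ω ∂(ProbabilityTheory.cond P {ω | Z ω = 1}) := by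
  have hY : (fun ω => (1 - Z ω) * Y ω) = fun ω => (1 - Z ω) * Y0 ω := by
    funext ω
    rw [hYdef, one_sub_mul_observed_eq (hZ01 ω)]
  change Integrable (attScore eps0 es Z (fun ω => (1 - Z ω) * Y ω) mu0s) P at hint
  change (∫ ω, attScore eps0 es Z (fun ω => (1 - Z ω) * Y ω) mu0s ω ∂P) / _ = _
  rw [hY] at hint hmu0 ⊢
  have hZ_bound : ∀ ω, ‖Z ω‖ ≤ 1 := fun ω ↦ by rcases hZ01 ω with h | h <;> simp [h]
  have hes_bound : ∀ᵐ ω ∂P, ‖es ω‖ ≤ 1 := by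
    filter_upwards [hes01] with ω h
    exact abs_le.mpr ⟨by linarith [h.1], h.2.le⟩
  have hY0' : Integrable (fun ω => (1 - Z ω) * Y0 ω) P :=
    hY0int.bdd_mul (measurable_const.sub hZmeas).aestronglyMeasurable (c := 1) <| .of_forall
      fun ω ↦ by rcases hZ01 ω with h | h <;> simp [h]
  have hcondExp : P[attScore eps0 es Z (fun ω => (1 - Z ω) * Y0 ω) mu0s|mX]
      =ᵐ[P] P[fun ω => Z ω * Y0 ω|mX] := by
    refine (condExp_attScore hmX heps0meas.stronglyMeasurable hesmeas.stronglyMeasurable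
      hes_bound hY0' (.of_bound hZmeas.aestronglyMeasurable 1 (.of_forall hZ_bound))
      (.of_forall hZ_bound) hmu0smeas.stronglyMeasurable hmu0sint hint).trans ?_
    rcases hcase with hprop | hout
    · filter_upwards [hprop, heX, hes01, hsens0] with ω hprop heω hes hsens
      rw [← heω, hprop]
      exact att_conditional_score_eq_of_propensity_eq (hprop ▸ hes.2.ne) hsens
    · filter_upwards [hout, heX, hov, hes01, hsens0, hmu0] with ω hout heω hov hes hsens hmu0
      rw [← heω, hout]
      exact att_conditional_score_eq_of_outcome_eq hov.2.ne hes.2.ne hsens hmu0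
  rw [integral_eq_of_condExp_ae_eq hmX hcondExp,
    integral_mul_eq_setIntegral_of_zero_or_one hZmeas hZ01, integral_cond_eq_setIntegral_div]

/-- Theorem S3 (double robustness for the average causal effect on the treated). -/
theorem att_double_robustness
    {Ω : Type*} [F : MeasurableSpace Ω] (P : Measure Ω) [IsProbabilityMeasure P]
    (Z Y1 Y0 Y : Ω → ℝ)
    (hZmeas : Measurable Z) (hZ01 : ∀ ω, Z ω = 0 ∨ Z ω = 1)
    (hY1int : Integrable Y1 P) (hY0int : Integrable Y0 P)
    (hYdef : ∀ ω, Y ω = Z ω * Y1 ω + (1 - Z ω) * Y0 ω)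
    (mX : MeasurableSpace Ω) (hmX : mX ≤ F)
    (eX : Ω → ℝ) (heXmeas : Measurable[mX] eX) (heX : eX =ᵐ[P] P[Z|mX])
    (hov : ∀ᵐ ω ∂P, 0 < eX ω ∧ eX ω < 1)
    (mu0 : Ω → ℝ) (hmu0meas : Measurable[mX] mu0)
    (hmu0 : (fun ω => mu0 ω * (1 - eX ω)) =ᵐ[P] P[fun ω => (1 - Z ω) * Y ω|mX])
    (eps0 : Ω → ℝ) (heps0meas : Measurable[mX] eps0)
    (heps0pos : ∀ᵐ ω ∂P, 0 < eps0 ω)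
    (hsens0 : ∀ᵐ ω ∂P, (1 - eX ω) * (P[fun ω' => Z ω' * Y0 ω'|mX]) ω
        = eps0 ω * eX ω * (P[fun ω' => (1 - Z ω') * Y0 ω'|mX]) ω)
    (he : 0 < P {ω | Z ω = 1})
    (es : Ω → ℝ) (hesmeas : Measurable[mX] es)
    (hes01 : ∀ᵐ ω ∂P, 0 < es ω ∧ es ω < 1)
    (mu0s : Ω → ℝ) (hmu0smeas : Measurable[mX] mu0s) (hmu0sint : Integrable mu0s P)
    (hint : Integrable (fun ω => eps0 ω * (es ω * ((1 - Z ω) * Y ω) / (1 - es ω)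
        - (es ω - Z ω) * mu0s ω / (1 - es ω))) P)
    (hcase : es =ᵐ[P] eX ∨ mu0s =ᵐ[P] mu0) :
    (∫ ω, eps0 ω * (es ω * ((1 - Z ω) * Y ω) / (1 - es ω)
        - (es ω - Z ω) * mu0s ω / (1 - es ω)) ∂P) / (P {ω | Z ω = 1}).toReal
      = ∫ ω, Y0 ω ∂(ProbabilityTheory.cond P {ω | Z ω = 1}) :=
  att_double_robustness_general (F := F) P Z Y1 Y0 Y hZmeas hZ01 hY0int hYdef mX hmX eX heX hov mu0
    hmu0 eps0 heps0meas hsens0 es hesmeas hes01 mu0s hmu0smeas hmu0sint hint hcase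
end
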